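/- In the independent exponential-uniform truncation model, the expected derivative of the score equals E_{θ₀}(ψ̇_{θ₀}) = α_{θ₀}·(2/θ₀² - s²e^{-θ₀s}/(1-e^{-θ₀s})² - G²e^{-Gθ₀}/(1-e^{-Gθ₀})²), where ψ_θ(x,t) = 1_D(x,t)[x - 1/θ + α̇_θ/α_θ] and α_θ = (1-e^{-θs})(1-e^{-Gθ})/(Gθ). -/

import Mathlib

open MeasureTheory Real Set

noncomputable def gg (G s θ : ℝ) : ℝ :=
  s * Real.exp (-θ*s) / (1 - Real.exp (-θ*s)) + G * Real.exp (-G*θ) / (1 - Real.exp (-G*θ)) - 1/θ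

lemma expos {a θ : ℝ} (ha : 0 < a) (hθ : 0 < θ) : 0 < 1 - Real.exp (-θ*a) := by
  have : Real.exp (-θ*a) < 1 := by
    rw [Real.exp_lt_one_iff]; nlinarith
  linarith

lemma exp_int (θ a b : ℝ) (hθ : θ ≠ 0) :
    ∫ x in a..b, Real.exp (-θ*x) = (Real.exp (-θ*a) - Real.exp (-θ*b))/θ := by
  have h : ∀ x : ℝ, HasDerivAt (fun y => -Real.exp (-θ*y)/θ) (Real.exp (-θ*x)) x := by
    intro x
    have h1 : HasDerivAt (fun y : ℝ => -θ*y) (-θ) x := by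
      simpa using (hasDerivAt_id x).const_mul (-θ)
    have h2 := (Real.hasDerivAt_exp (-θ*x)).comp x h1
    have h3 := (h2.neg).div_const θ
    refine h3.congr_deriv ?_; symm
    field_simp
  rw [intervalIntegral.integral_eq_sub_of_hasDerivAt (fun x _ => h x)]
  · ring
  · apply Continuous.intervalIntegrable; continuity

lemma hasDerivAt_expratio (a θ : ℝ) (h : 1 - Real.exp (-θ*a) ≠ 0) :
    HasDerivAt (fun θ => a * Real.exp (-θ*a) / (1 - Real.exp (-θ*a)))
      (-(a^2 * Real.exp (-θ*a) / (1 - Real.exp (-θ*a))^2)) θ := by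
  have h1 : HasDerivAt (fun y : ℝ => -y*a) (-a) θ := by
    simpa using ((hasDerivAt_id θ).const_mul (-1:ℝ)).mul_const a
  have h2 : HasDerivAt (fun y : ℝ => Real.exp (-y*a)) (-a * Real.exp (-θ*a)) θ := by
    simpa [mul_comm] using h1.exp
  have h3 : HasDerivAt (fun y : ℝ => a * Real.exp (-y*a)) (a * (-a * Real.exp (-θ*a))) θ :=
    h2.const_mul a
  have h4 : HasDerivAt (fun y : ℝ => 1 - Real.exp (-y*a)) (a * Real.exp (-θ*a)) θ := by
    simpa using h2.const_sub (1:ℝ)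
  have h5 := h3.div h4 h
  refine h5.congr_deriv ?_; symm
  field_simp
  ring

lemma hasDerivAt_f (G s θ : ℝ) (hG : 0 < G) (hs : 0 < s) (hθ : 0 < θ) :
    HasDerivAt (fun θ => (1 - Real.exp (-θ * s)) * (1 - Real.exp (-G * θ)) / (G * θ))
      (gg G s θ * ((1 - Real.exp (-θ * s)) * (1 - Real.exp (-G * θ)) / (G * θ))) θ := by
  have h1 : HasDerivAt (fun y : ℝ => -y*s) (-s) θ := by
    simpa using ((hasDerivAt_id θ).const_mul (-1:ℝ)).mul_const s
  have h2 : HasDerivAt (fun y : ℝ => Real.exp (-y*s)) (-s * Real.exp (-θ*s)) θ := by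
    simpa [mul_comm] using h1.exp
  have hA : HasDerivAt (fun y : ℝ => 1 - Real.exp (-y*s)) (s * Real.exp (-θ*s)) θ := by
    simpa using h2.const_sub (1:ℝ)
  have h1' : HasDerivAt (fun y : ℝ => -G*y) (-G) θ := by
    simpa using (hasDerivAt_id θ).const_mul (-G)
  have h2' : HasDerivAt (fun y : ℝ => Real.exp (-G*y)) (-G * Real.exp (-G*θ)) θ := by
    simpa [mul_comm] using h1'.exp
  have hB : HasDerivAt (fun y : ℝ => 1 - Real.exp (-G*y)) (G * Real.exp (-G*θ)) θ := by
    simpa using h2'.const_sub (1:ℝ)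
  have hAB := hA.mul hB
  have hC : HasDerivAt (fun y : ℝ => G*y) G θ := by
    simpa using (hasDerivAt_id θ).const_mul G
  have hCne : G * θ ≠ 0 := by positivity
  have h5 := hAB.div hC hCne
  refine h5.congr_deriv ?_; symm
  simp only [Pi.mul_apply]
  have e1 := (expos hs hθ).ne'
  have e2 : (1 : ℝ) - Real.exp (-G*θ) ≠ 0 := by
    have := expos hG hθ (a := G); rw [show -θ*G = -G*θ by ring] at this; exact this.ne'
  unfold gg
  set E1 := Real.exp (-θ*s) with hE1
  set E2 := Real.exp (-G*θ) with hE2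
  field_simp

lemma hasDerivAt_gg (G s θ : ℝ) (hG : 0 < G) (hs : 0 < s) (hθ : 0 < θ) :
    HasDerivAt (gg G s)
      (1/θ^2 - s^2 * Real.exp (-θ*s) / (1 - Real.exp (-θ*s))^2
        - G^2 * Real.exp (-G*θ) / (1 - Real.exp (-G*θ))^2) θ := by
  have e1 := (expos hs hθ).ne'
  have e2 : (1 : ℝ) - Real.exp (-θ*G) ≠ 0 := (expos hG hθ).ne'
  have h1 := hasDerivAt_expratio s θ e1
  have h2 := hasDerivAt_expratio G θ e2
  have h2' : HasDerivAt (fun θ => G * Real.exp (-G*θ) / (1 - Real.exp (-G*θ)))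
      (-(G^2 * Real.exp (-G*θ) / (1 - Real.exp (-G*θ))^2)) θ := by
    have hfun : (fun θ : ℝ => G * Real.exp (-θ*G) / (1 - Real.exp (-θ*G)))
        = fun θ : ℝ => G * Real.exp (-G*θ) / (1 - Real.exp (-G*θ)) := by
      funext y; rw [show -y*G = -G*y by ring]
    rw [← hfun]
    convert h2 using 2 <;> rw [show -G*θ = -θ*G by ring]
  have h3 : HasDerivAt (fun θ : ℝ => 1/θ) (-(1/θ^2)) θ := by
    simpa [one_div] using hasDerivAt_inv hθ.ne'
  have h := (h1.add h2').sub h3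
  unfold gg
  refine h.congr_deriv ?_; symm
  ring

/-- In the independent exponential-uniform truncation model, the expected derivative
of the score `ψ_θ(x,t) = 1_D(x,t)(x - 1/θ + α̇_θ/α_θ)` equals
`α_{θ₀}(2/θ₀² - s²e^{-θ₀s}/(1-e^{-θ₀s})² - G²e^{-Gθ₀}/(1-e^{-Gθ₀})²)`. -/
theorem expected_score_derivative_exponential_uniform
    (θ₀ G s : ℝ) (hθ : 0 < θ₀) (hG : 0 < G) (hs : 0 < s)
    (α : ℝ → ℝ)
    (hα : ∀ θ > (0:ℝ), α θ = (1 - Real.exp (-θ * s)) * (1 - Real.exp (-G * θ)) / (G * θ))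
    (D : Set (ℝ × ℝ))
    (hD : D = {p : ℝ × ℝ | 0 < p.2 ∧ p.2 ≤ p.1 ∧ p.1 ≤ p.2 + s ∧ p.2 ≤ G})
    (ψ : ℝ → ℝ → ℝ → ℝ)
    (hψ : ∀ θ x t, ψ θ x t =
      D.indicator (fun _ => (1:ℝ)) (x, t) * (x - 1/θ + deriv α θ / α θ)) :
    (∫ x in Set.Ioi (0:ℝ), ∫ t in Set.Icc (0:ℝ) G,
        (deriv (fun θ => ψ θ x t) θ₀) * (θ₀ * Real.exp (-θ₀ * x) / G))
      = α θ₀ * (2 / θ₀^2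
          - s^2 * Real.exp (-θ₀ * s) / (1 - Real.exp (-θ₀ * s))^2
          - G^2 * Real.exp (-G * θ₀) / (1 - Real.exp (-G * θ₀))^2) := by
  set K : ℝ := 2 / θ₀^2
          - s^2 * Real.exp (-θ₀ * s) / (1 - Real.exp (-θ₀ * s))^2
          - G^2 * Real.exp (-G * θ₀) / (1 - Real.exp (-G * θ₀))^2 with hK
  set c : ℝ × ℝ → ℝ := D.indicator (fun _ => (1:ℝ)) with hc
  -- Step 1: the score ratio equals gg on (0, ∞)
  have hratio : ∀ θ ∈ Ioi (0:ℝ), deriv α θ / α θ = gg G s θ := by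
    intro θ hθ'
    rw [mem_Ioi] at hθ'
    have hf := hasDerivAt_f G s θ hG hs hθ'
    have hα' : HasDerivAt α
        (gg G s θ * ((1 - Real.exp (-θ * s)) * (1 - Real.exp (-G * θ)) / (G * θ))) θ := by
      apply hf.congr_of_eventuallyEq
      filter_upwards [Ioi_mem_nhds hθ'] with y hy
      exact hα y hy
    have hαpos : 0 < α θ := by
      rw [hα θ hθ']
      have p1 := expos hs hθ'
      have p2 : (0:ℝ) < 1 - Real.exp (-G*θ) := by
        have := expos hG hθ' (a := G); rw [show -θ*G = -G*θ by ring] at this; exact this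
      positivity
    rw [hα'.deriv, ← hα θ hθ', mul_div_assoc, div_self hαpos.ne', mul_one]
  -- Step 2: pointwise derivative of the score
  have key : ∀ x t : ℝ, deriv (fun θ => ψ θ x t) θ₀ = c (x, t) * K := by
    intro x t
    have hfun : (fun θ => ψ θ x t) =ᶠ[nhds θ₀]
        (fun θ => c (x, t) * (x - 1/θ + gg G s θ)) := by
      filter_upwards [Ioi_mem_nhds hθ] with θ hθ'
      rw [hψ, hratio θ hθ']
    rw [hfun.deriv_eq]
    have hd : HasDerivAt (fun θ => x - 1/θ + gg G s θ) K θ₀ := by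
      have h3 : HasDerivAt (fun θ : ℝ => 1/θ) (-(1/θ₀^2)) θ₀ := by
        simpa [one_div] using hasDerivAt_inv hθ.ne'
      have h := ((hasDerivAt_const θ₀ x).sub h3).add (hasDerivAt_gg G s θ₀ hG hs hθ)
      refine h.congr_deriv ?_; symm
      rw [hK]
      ring
    exact ((hd.const_mul (c (x, t))).deriv)
  simp_rw [key]
  -- Step 3: rearrange the integrand
  have hre : ∀ x t : ℝ, c (x, t) * K * (θ₀ * Real.exp (-θ₀ * x) / G)
      = (K * θ₀ / G) * (c (x, t) * Real.exp (-θ₀ * x)) := by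
    intro x t; ring
  simp_rw [hre, integral_const_mul]
  -- Step 4: Fubini
  have hDmeas : MeasurableSet D := by
    rw [hD]
    apply MeasurableSet.inter
    · exact measurableSet_lt measurable_const measurable_snd
    apply MeasurableSet.inter
    · exact measurableSet_le measurable_snd measurable_fst
    apply MeasurableSet.inter
    · exact measurableSet_le measurable_fst (measurable_snd.add_const s)
    · exact measurableSet_le measurable_snd measurable_const
  haveI hfin : IsFiniteMeasure (volume.restrict (Icc (0:ℝ) G)) := by
    constructor
    rw [Measure.restrict_apply_univ, Real.volume_Icc]
    exact ENNReal.ofReal_lt_top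
  have hint : Integrable (fun p : ℝ × ℝ => c p * Real.exp (-θ₀ * p.1))
      ((volume.restrict (Ioi (0:ℝ))).prod (volume.restrict (Icc (0:ℝ) G))) := by
    have hbound : Integrable (fun p : ℝ × ℝ => Real.exp (-θ₀ * p.1) * 1)
        ((volume.restrict (Ioi (0:ℝ))).prod (volume.restrict (Icc (0:ℝ) G))) :=
      Integrable.mul_prod (exp_neg_integrableOn_Ioi 0 hθ) (integrable_const 1)
    apply Integrable.mono' (by simpa using hbound)
    · exact ((measurable_const.indicator hDmeas).mul
        ((measurable_fst.const_mul (-θ₀)).exp)).aestronglyMeasurable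
    · filter_upwards with p
      rw [Real.norm_eq_abs, abs_mul, show -(θ₀*p.1) = -θ₀*p.1 by ring]
      have h1 : |c p| ≤ 1 := by
        rw [hc]
        by_cases h : p ∈ D <;> simp [indicator, h]
      have h2 : |Real.exp (-θ₀ * p.1)| = Real.exp (-θ₀ * p.1) :=
        abs_of_pos (Real.exp_pos _)
      rw [h2]
      nlinarith [Real.exp_pos (-θ₀ * p.1), abs_nonneg (c p)]
  have swap := integral_integral_swap
    (f := fun x t => c (x, t) * Real.exp (-θ₀ * x)) hint
  rw [swap]
  -- Step 5: inner integral over x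
  rw [MeasureTheory.integral_Icc_eq_integral_Ioc]
  have hpt : ∀ t ∈ Ioc (0:ℝ) G,
      (∫ x in Ioi (0:ℝ), c (x, t) * Real.exp (-θ₀ * x))
        = (Real.exp (-θ₀*t) - Real.exp (-θ₀*(t+s))) / θ₀ := by
    intro t ht
    have hind : ∀ x : ℝ, c (x, t) * Real.exp (-θ₀ * x)
        = (Icc t (t+s)).indicator (fun x => Real.exp (-θ₀ * x)) x := by
      intro x
      rw [hc, hD]
      by_cases hx : x ∈ Icc t (t+s)
      · rw [indicator_of_mem hx]
        rw [Set.indicator_of_mem, one_mul]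
        exact ⟨ht.1, hx.1, hx.2, ht.2⟩
      · rw [indicator_of_notMem hx, Set.indicator_of_notMem, zero_mul]
        intro hmem
        exact hx ⟨hmem.2.1, hmem.2.2.1⟩
    simp_rw [hind]
    rw [setIntegral_indicator measurableSet_Icc]
    rw [show Ioi (0:ℝ) ∩ Icc t (t+s) = Icc t (t+s) from
      inter_eq_self_of_subset_right (fun x hx => lt_of_lt_of_le ht.1 hx.1)]
    rw [MeasureTheory.integral_Icc_eq_integral_Ioc,
      ← intervalIntegral.integral_of_le (by linarith [hs] : t ≤ t+s),
      exp_int θ₀ t (t+s) hθ.ne']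
  rw [setIntegral_congr_fun measurableSet_Ioc hpt]
  -- Step 6: outer integral over t
  have hsplit : ∀ t : ℝ, (Real.exp (-θ₀*t) - Real.exp (-θ₀*(t+s))) / θ₀
      = ((1 - Real.exp (-θ₀*s)) / θ₀) * Real.exp (-θ₀*t) := by
    intro t
    rw [show -θ₀*(t+s) = -θ₀*t + -θ₀*s by ring, Real.exp_add]
    ring
  simp_rw [hsplit, integral_const_mul]
  rw [← intervalIntegral.integral_of_le hG.le, exp_int θ₀ 0 G hθ.ne']
  -- Step 7: final algebra
  rw [hα θ₀ hθ, hK]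
  have e1 := (expos hs hθ).ne'
  have e2 : (1 : ℝ) - Real.exp (-G*θ₀) ≠ 0 := by
    have := expos hG hθ (a := G); rw [show -θ₀*G = -G*θ₀ by ring] at this; exact this.ne'
  rw [show -θ₀*G = -G*θ₀ by ring, show (-θ₀*0 : ℝ) = 0 by ring, Real.exp_zero]
  set E1 := Real.exp (-θ₀*s) with hE1
  set E2 := Real.exp (-G*θ₀) with hE2
  field_simp
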